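/- arXiv:2512.00566 — 4 statements merged into one kernel-verified Lean document; each statement's English description precedes it below -/
import Mathlib

section
/- Let B̂ ∈ ℝ, v̂ > 0, v̂_P > 0, and define L̂(u) := Φ((u − B̂)/v̂), Ĥ(u) := Φ(m̂⁻¹Φ⁻¹(u)) with m̂ := v̂_P/v̂. Then for every α ∈ (0,1), L̂⁻¹(Ĥ⁻¹(α)) = B̂ + v̂_P · z_α, where z_α := Φ⁻¹(α). Consequently the interval [ĝ − a·L̂⁻¹(Ĥ⁻¹(1−α/2)), ĝ − a·L̂⁻¹(Ĥ⁻¹(α/2))] equals [(ĝ − a·B̂) − a·v̂_P·z_{1−α/2}, (ĝ − a·B̂) + a·v̂_P·z_{1−α/2}] for any a > 0 and ĝ ∈ ℝ. -/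
/-! Inverting `Ĥ` gives `Ĥ⁻¹(α) = Φ(m̂ z_α)`, and since `m̂ = v̂_P / v̂` this is `L̂(B̂ + v̂_P z_α)`.
The interval identity then follows from the symmetry `z_{α/2} = -z_{1-α/2}` of the normal
quantiles, which comes from `Φ(-x) = 1 - Φ(x)`. -/

open MeasureTheory ProbabilityTheory

/-- The standard normal cumulative distribution function. -/
noncomputable def stdNormalCDF (x : ℝ) : ℝ := (gaussianReal 0 1 (Set.Iic x)).toReal

theorem stdNormalCDF_neg (x : ℝ) : stdNormalCDF (-x) = 1 - stdNormalCDF x := by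
  have hsymm : (gaussianReal 0 1).map (fun y ↦ -y) = gaussianReal 0 1 := by
    simpa using gaussianReal_map_neg (μ := 0) (v := 1)
  have hpre : (fun y : ℝ ↦ -y) ⁻¹' Set.Iic (-x) = Set.Ici x := by
    ext y
    simp
  have hx : gaussianReal 0 1 {x} = 0 :=
    gaussianReal_absolutelyContinuous 0 one_ne_zero (measure_singleton x)
  calc stdNormalCDF (-x) = (gaussianReal 0 1).real (Set.Ici x) := by
        rw [stdNormalCDF, measureReal_def, ← hpre,
          ← Measure.map_apply (by fun_prop) measurableSet_Iic, hsymm]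
    _ = (gaussianReal 0 1).real (Set.Iic x)ᶜ := by
        rw [Set.compl_Iic, measureReal_congr (Ioi_ae_eq_Ici' hx)]
    _ = 1 - stdNormalCDF x := probReal_compl_eq_one_sub measurableSet_Iic

section QuantileFunction

variable {Φ Φinv : ℝ → ℝ} (hΦ : ∀ u ∈ Set.Ioo (0 : ℝ) 1, Φ (Φinv u) = u)
  (hΦinv : Function.LeftInverse Φinv Φ)
include hΦ hΦinv

theorem quantile_one_sub (hsymm : ∀ x, Φ (-x) = 1 - Φ x) {u : ℝ} (hu : u ∈ Set.Ioo (0 : ℝ) 1) :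
    Φinv (1 - u) = -Φinv u := by
  rw [← hΦinv (-Φinv u), hsymm, hΦ u hu]

theorem eq_apply_mul_quantile_of_apply_inv_mul_quantile {m y u : ℝ} (hm : m ≠ 0)
    (hy : y ∈ Set.Ioo (0 : ℝ) 1) (h : Φ (m⁻¹ * Φinv y) = u) : y = Φ (m * Φinv u) := by
  have hscale : m⁻¹ * Φinv y = Φinv u := by rw [← h, hΦinv]
  rw [← (inv_mul_eq_iff_eq_mul₀ hm).mp hscale, hΦ y hy]

end QuantileFunction

/-- Exact equality of the prepivoted bootstrap interval and the RBC-type interval in the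
Gaussian case: `L̂⁻¹(Ĥ⁻¹(α)) = B̂ + v̂_P z_α`, and hence the equal-tailed prepivoted interval
coincides with the bias-corrected interval with adjusted standard error. -/
theorem prepivoted_interval_eq_rbc
    (Φinv : ℝ → ℝ)
    (hΦinv₁ : ∀ u ∈ Set.Ioo (0 : ℝ) 1, stdNormalCDF (Φinv u) = u)
    (hΦinv₂ : ∀ x : ℝ, Φinv (stdNormalCDF x) = x)
    (Bhat vhat vhatP : ℝ) (hv : 0 < vhat) (hvP : 0 < vhatP)
    (mhat : ℝ) (hm : mhat = vhatP / vhat)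
    (L H : ℝ → ℝ)
    (hL : ∀ u : ℝ, L u = stdNormalCDF ((u - Bhat) / vhat))
    (hH : ∀ u : ℝ, H u = stdNormalCDF (mhat⁻¹ * Φinv u))
    (Linv Hinv : ℝ → ℝ)
    (hLinv : ∀ x : ℝ, Linv (L x) = x)
    (hHinv : ∀ u ∈ Set.Ioo (0 : ℝ) 1, H (Hinv u) = u ∧ Hinv u ∈ Set.Ioo (0 : ℝ) 1)
    (α : ℝ) (hα : α ∈ Set.Ioo (0 : ℝ) 1) :
    Linv (Hinv α) = Bhat + vhatP * Φinv α ∧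
    ∀ a : ℝ, 0 < a → ∀ ghat : ℝ,
      Set.Icc (ghat - a * Linv (Hinv (1 - α / 2))) (ghat - a * Linv (Hinv (α / 2)))
        = Set.Icc ((ghat - a * Bhat) - a * vhatP * Φinv (1 - α / 2))
                  ((ghat - a * Bhat) + a * vhatP * Φinv (1 - α / 2)) := by
  have hm0 : mhat ≠ 0 := by rw [hm]; positivity
  have hquantile : ∀ u ∈ Set.Ioo (0 : ℝ) 1, Linv (Hinv u) = Bhat + vhatP * Φinv u := by
    intro u hu
    obtain ⟨hHu, hmem⟩ := hHinv u hu
    rw [hH] at hHu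
    have hHinvu : Hinv u = L (Bhat + vhatP * Φinv u) := by
      rw [eq_apply_mul_quantile_of_apply_inv_mul_quantile hΦinv₁ hΦinv₂ hm0 hmem hHu, hL, hm]
      congr 1
      field_simp
      ring
    rw [hHinvu, hLinv]
  have hα₂ : α / 2 ∈ Set.Ioo (0 : ℝ) 1 := ⟨by linarith [hα.1], by linarith [hα.2]⟩
  have hα₁ : 1 - α / 2 ∈ Set.Ioo (0 : ℝ) 1 := ⟨by linarith [hα.2], by linarith [hα.1]⟩
  refine ⟨hquantile α hα, fun a _ ghat => ?_⟩
  rw [hquantile _ hα₂, hquantile _ hα₁, quantile_one_sub hΦinv₁ hΦinv₂ stdNormalCDF_neg hα₂]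
  congr 1 <;> ring
end

section
/- Let w : ℝ → ℝ be integrable with compact support, ∫ w = 1, ∫ w(u)u^j du = 0 for j = 1, …, p, and ∫ w(u)u^{p+1} du = C. Define w_PLP(u) := 2w(u) − (w*w)(u). Then ∫ w_PLP(u) du = 1, ∫ w_PLP(u) u^j du = 0 for j = 1, …, p, and ∫ w_PLP(u) u^{p+1} du = 0. -/
open MeasureTheory

/-- The shear `(u, r) ↦ (r, u - r)` as a measurable equivalence of `ℝ × ℝ`. -/
noncomputable def shearE : (ℝ × ℝ) ≃ᵐ (ℝ × ℝ) where
  toFun z := (z.2, z.1 - z.2)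
  invFun z := (z.1 + z.2, z.1)
  left_inv z := by simp
  right_inv z := by simp
  measurable_toFun := (measurable_snd.prodMk (measurable_fst.sub measurable_snd))
  measurable_invFun := ((measurable_fst.add measurable_snd).prodMk measurable_fst)

lemma shearE_mp : MeasurePreserving shearE
    ((volume : Measure ℝ).prod volume) ((volume : Measure ℝ).prod volume) :=
  measurePreserving_prod_sub_swap volume volume

/-- Moments of a compactly supported integrable function are integrable. -/
lemma mom_integrable (w : ℝ → ℝ) (hw : Integrable w) (hwsupp : HasCompactSupport w)
    (k : ℕ) : Integrable (fun u : ℝ => w u * u ^ k) := by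
  obtain ⟨R, hR0, hR⟩ : ∃ R : ℝ, 0 ≤ R ∧ tsupport w ⊆ Metric.closedBall 0 R := by
    obtain ⟨R, hR⟩ := hwsupp.isCompact.isBounded.subset_closedBall 0
    exact ⟨max R 0, le_max_right _ _, hR.trans (Metric.closedBall_subset_closedBall
      (le_max_left _ _))⟩
  refine Integrable.mono' ((hw.norm.mul_const (R ^ k)))
    (hw.1.mul (measurable_id.pow_const k).aestronglyMeasurable)
    (Filter.Eventually.of_forall fun u => ?_)
  by_cases hu : w u = 0
  · simp [hu, mul_nonneg (abs_nonneg _) (pow_nonneg hR0 k)]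
  · have hmem : u ∈ tsupport w := subset_tsupport w hu
    have : |u| ≤ R := by simpa [Real.dist_eq] using hR hmem
    have hpow : |u ^ k| ≤ R ^ k := by
      rw [abs_pow]; exact pow_le_pow_left₀ (abs_nonneg u) this k
    calc ‖w u * u ^ k‖ = ‖w u‖ * |u ^ k| := by rw [norm_mul]; rfl
    _ ≤ ‖w u‖ * R ^ k := by
        exact mul_le_mul_of_nonneg_left hpow (norm_nonneg _)

/-- The two-variable binomial kernel is integrable on the product. -/
lemma f_integrable (w : ℝ → ℝ) (hw : Integrable w) (hwsupp : HasCompactSupport w) (j : ℕ) :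
    Integrable (fun z : ℝ × ℝ => w z.1 * w z.2 * (z.1 + z.2) ^ j)
      ((volume : Measure ℝ).prod volume) := by
  have heq : (fun z : ℝ × ℝ => w z.1 * w z.2 * (z.1 + z.2) ^ j) =
      fun z : ℝ × ℝ => ∑ k ∈ Finset.range (j + 1),
        (w z.1 * z.1 ^ k * (j.choose k : ℝ)) * (w z.2 * z.2 ^ (j - k)) := by
    funext z
    rw [add_pow, Finset.mul_sum]
    refine Finset.sum_congr rfl fun k _ => by ring
  rw [heq]
  refine integrable_finset_sum _ fun k _ => ?_
  exact (((mom_integrable w hw hwsupp k).mul_const _).mul_prod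
    (mom_integrable w hw hwsupp (j - k)))

/-- Moments of the convolution: binomial formula. -/
lemma conv_moment (w : ℝ → ℝ) (hw : Integrable w) (hwsupp : HasCompactSupport w)
    (wconv : ℝ → ℝ) (hconv : ∀ u : ℝ, wconv u = ∫ r : ℝ, w r * w (u - r)) (j : ℕ) :
    (∫ u : ℝ, wconv u * u ^ j) = ∑ k ∈ Finset.range (j + 1),
      (j.choose k : ℝ) * (∫ u : ℝ, w u * u ^ k) * (∫ u : ℝ, w u * u ^ (j - k)) := by
  set f : ℝ × ℝ → ℝ := fun z => w z.1 * w z.2 * (z.1 + z.2) ^ j with hf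
  have hfInt := f_integrable w hw hwsupp j
  have hcomp : ∀ z : ℝ × ℝ, f (shearE z) = w z.2 * w (z.1 - z.2) * z.1 ^ j := by
    intro z
    simp only [hf, shearE, MeasurableEquiv.coe_mk, Equiv.coe_fn_mk]
    ring_nf
  have hGInt : Integrable (fun z : ℝ × ℝ => w z.2 * w (z.1 - z.2) * z.1 ^ j)
      ((volume : Measure ℝ).prod volume) := by
    have := (shearE_mp.integrable_comp_emb shearE.measurableEmbedding (g := f)).mpr hfInt
    refine this.congr (Filter.Eventually.of_forall fun z => ?_)
    exact (hcomp z)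
  have step1 : (∫ u : ℝ, wconv u * u ^ j)
      = ∫ u : ℝ, ∫ r : ℝ, w r * w (u - r) * u ^ j := by
    refine integral_congr_ae (Filter.Eventually.of_forall fun u => ?_)
    show wconv u * u ^ j = ∫ r : ℝ, w r * w (u - r) * u ^ j
    rw [hconv u, ← integral_mul_const]
  have step2 : (∫ u : ℝ, ∫ r : ℝ, w r * w (u - r) * u ^ j)
      = ∫ z : ℝ × ℝ, w z.2 * w (z.1 - z.2) * z.1 ^ j
        ∂((volume : Measure ℝ).prod volume) :=
    integral_integral (f := fun u r => w r * w (u - r) * u ^ j) hGInt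
  have step3 : (∫ z : ℝ × ℝ, w z.2 * w (z.1 - z.2) * z.1 ^ j
        ∂((volume : Measure ℝ).prod volume))
      = ∫ z : ℝ × ℝ, f z ∂((volume : Measure ℝ).prod volume) := by
    exact (integral_congr_ae (Filter.Eventually.of_forall fun z =>
      (hcomp z).symm)).trans (shearE_mp.integral_comp' f)
  have step4 : (∫ z : ℝ × ℝ, f z ∂((volume : Measure ℝ).prod volume))
      = ∑ k ∈ Finset.range (j + 1),
        (j.choose k : ℝ) * (∫ u : ℝ, w u * u ^ k) * (∫ u : ℝ, w u * u ^ (j - k)) := by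
    have heq : f = fun z : ℝ × ℝ => ∑ k ∈ Finset.range (j + 1),
        (w z.1 * z.1 ^ k * (j.choose k : ℝ)) * (w z.2 * z.2 ^ (j - k)) := by
      funext z
      show w z.1 * w z.2 * (z.1 + z.2) ^ j = _
      rw [add_pow, Finset.mul_sum]
      refine Finset.sum_congr rfl fun k _ => by ring
    rw [heq]
    rw [integral_finset_sum _ fun k _ =>
      (((mom_integrable w hw hwsupp k).mul_const _).mul_prod
        (mom_integrable w hw hwsupp (j - k)))]
    refine Finset.sum_congr rfl fun k _ => ?_
    rw [integral_prod_mul (f := fun u => w u * u ^ k * (j.choose k : ℝ))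
      (g := fun u => w u * u ^ (j - k)), integral_mul_const]
    ring
  rw [step1, step2, step3, step4]

/-- The convolution moment function is integrable. -/
lemma conv_mom_integrable (w : ℝ → ℝ) (hw : Integrable w) (hwsupp : HasCompactSupport w)
    (wconv : ℝ → ℝ) (hconv : ∀ u : ℝ, wconv u = ∫ r : ℝ, w r * w (u - r)) (j : ℕ) :
    Integrable (fun u : ℝ => wconv u * u ^ j) := by
  have hGInt : Integrable (fun z : ℝ × ℝ => w z.2 * w (z.1 - z.2) * z.1 ^ j)
      ((volume : Measure ℝ).prod volume) := by
    have hfInt := f_integrable w hw hwsupp j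
    have := (shearE_mp.integrable_comp_emb shearE.measurableEmbedding
      (g := fun z : ℝ × ℝ => w z.1 * w z.2 * (z.1 + z.2) ^ j)).mpr hfInt
    refine this.congr (Filter.Eventually.of_forall fun z => ?_)
    simp only [shearE, MeasurableEquiv.coe_mk, Equiv.coe_fn_mk, Function.comp_apply]
    ring_nf
  have := hGInt.integral_prod_left
  refine this.congr (Filter.Eventually.of_forall fun u => ?_)
  show (∫ r : ℝ, w r * w (u - r) * u ^ j) = wconv u * u ^ j
  rw [hconv u, ← integral_mul_const]

/-- The PLP bias-corrected equivalent kernel `w_PLP = 2w − w*w` reproduces constants,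
annihilates monomials of degree `1, …, p`, and has vanishing `(p+1)`-th moment. -/
theorem plp_kernel_moments
    (p : ℕ) (w : ℝ → ℝ)
    (hw : Integrable w) (hwsupp : HasCompactSupport w)
    (C : ℝ)
    (h0 : (∫ u : ℝ, w u) = 1)
    (hj : ∀ j : ℕ, 1 ≤ j → j ≤ p → (∫ u : ℝ, w u * u ^ j) = 0)
    (hC : (∫ u : ℝ, w u * u ^ (p + 1)) = C)
    (wconv wPLP : ℝ → ℝ)
    (hconv : ∀ u : ℝ, wconv u = ∫ r : ℝ, w r * w (u - r))
    (hPLP : ∀ u : ℝ, wPLP u = 2 * w u - wconv u) :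
    (∫ u : ℝ, wPLP u) = 1 ∧
    (∀ j : ℕ, 1 ≤ j → j ≤ p → (∫ u : ℝ, wPLP u * u ^ j) = 0) ∧
    (∫ u : ℝ, wPLP u * u ^ (p + 1)) = 0 := by
  -- moment abbreviation
  set M : ℕ → ℝ := fun k => ∫ u : ℝ, w u * u ^ k with hM
  have hM0 : M 0 = 1 := by
    show (∫ u : ℝ, w u * u ^ 0) = 1
    simpa using h0
  have key : ∀ j : ℕ, (∫ u : ℝ, wPLP u * u ^ j)
      = 2 * M j - ∑ k ∈ Finset.range (j + 1), (j.choose k : ℝ) * M k * M (j - k) := by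
    intro j
    have h1 : (∫ u : ℝ, wPLP u * u ^ j)
        = ∫ u : ℝ, (2 * (w u * u ^ j) - wconv u * u ^ j) := by
      refine integral_congr_ae (Filter.Eventually.of_forall fun u => ?_)
      show wPLP u * u ^ j = 2 * (w u * u ^ j) - wconv u * u ^ j
      rw [hPLP u]; ring
    rw [h1, integral_sub (((mom_integrable w hw hwsupp j).const_mul 2))
      (conv_mom_integrable w hw hwsupp wconv hconv j),
      integral_const_mul, conv_moment w hw hwsupp wconv hconv j]
  refine ⟨?_, ?_, ?_⟩
  · have := key 0
    simp only [pow_zero, mul_one] at this ⊢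
    rw [this]
    simp [hM0]
    norm_num
  · intro j h1j hjp
    have hMj : M j = 0 := hj j h1j hjp
    rw [key j, hMj]
    have hsum : ∑ k ∈ Finset.range (j + 1), (j.choose k : ℝ) * M k * M (j - k) = 0 := by
      refine Finset.sum_eq_zero fun k hk => ?_
      rcases Nat.eq_zero_or_pos k with hk0 | hk1
      · subst hk0
        simp only [Nat.sub_zero, hMj, mul_zero]
      · have hkj : k ≤ j := Nat.lt_succ_iff.mp (Finset.mem_range.mp hk)
        have : M k = 0 := hj k hk1 (hkj.trans hjp)
        rw [this]; ring
    rw [hsum]; ring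
  · rw [key (p + 1)]
    have hsum : ∑ k ∈ Finset.range (p + 2), ((p + 1).choose k : ℝ) * M k * M (p + 1 - k)
        = 2 * C := by
      rw [show p + 2 = (p + 1) + 1 from rfl, Finset.sum_range_succ]
      rw [Finset.sum_range_succ']
      have hmid : ∑ k ∈ Finset.range p, ((p + 1).choose (k + 1) : ℝ) * M (k + 1)
          * M (p + 1 - (k + 1)) = 0 := by
        refine Finset.sum_eq_zero fun k hk => ?_
        have hk1 : 1 ≤ k + 1 := Nat.succ_le_succ (Nat.zero_le k)
        have hkp : k + 1 ≤ p := Nat.succ_le_of_lt (Finset.mem_range.mp hk)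
        have hz : M (k + 1) = 0 := hj (k + 1) hk1 hkp
        rw [hz]; ring
      rw [hmid]
      simp only [Nat.choose_zero_right, Nat.choose_self, Nat.sub_zero, Nat.sub_self,
        Nat.cast_one, pow_zero, one_mul, zero_add]
      have hMp1 : M (p + 1) = C := hC
      rw [hM0, hMp1]; ring
    rw [hsum]
    have hMp1 : M (p + 1) = C := hC
    rw [hMp1]; ring
end

section
/- For the uniform kernel K(u) = (1/2)·1_{|u|<1} and polynomial order p = 1 (interior point), the RBC equivalent kernel is w_RBC(u) = (9/8 − (15/8)u²)·1_{|u|<1}, and ∫ w_RBC(u)² du = 9/8. Combined with K_PLP = 5/6 for the same kernel, it follows that K_PLP < K_RBC, i.e., 5/6 < 9/8. -/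
open MeasureTheory Matrix

/-- The uniform kernel (= its `p = 1` equivalent kernel). -/
noncomputable def unifK (u : ℝ) : ℝ := if |u| < 1 then 1 / 2 else 0

/-- The bias constant `C = ∫ w(u) u² du` for the uniform kernel, `p = 1`. -/
noncomputable def unifC : ℝ := ∫ u : ℝ, unifK u * u ^ 2

/-- The order-2 Gram matrix `G₂ = ∫ r₂ r₂ᵀ K`. -/
noncomputable def unifG2 : Matrix (Fin 3) (Fin 3) ℝ :=
  Matrix.of fun i j => ∫ u : ℝ, u ^ ((i : ℕ) + (j : ℕ)) * unifK u

/-- The GP-bootstrap bias-estimator equivalent kernel `w_GPbc = C·e₂ᵀG₂⁻¹r₂(u)K(u)`. -/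
noncomputable def unifWGPbc (u : ℝ) : ℝ :=
  unifC * (∑ j : Fin 3, unifG2⁻¹ 2 j * u ^ (j : ℕ)) * unifK u

/-- The RBC equivalent kernel `w_RBC = w − w_GPbc`. -/
noncomputable def unifWRBC (u : ℝ) : ℝ := unifK u - unifWGPbc u

/-!
The moments of `K` are `μₙ = ∫₋₁¹ uⁿ/2 = (1 - (-1)ⁿ⁺¹) / (2(n+1))`, so `C = μ₂ = 1/3` and `G₂` is
explicit; its inverse has last row `(-15/4, 0, 45/4)`. Hence
`w_GPbc = (1/3)(-15/4 + 45/4 u²) K = (-5/8 + 15/8 u²) 1_{|u|<1}`, and `w_RBC = K - w_GPbc`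
is the stated quadratic on `(-1, 1)`; `K_RBC` is then the integral of a polynomial over `[-1, 1]`.
-/

theorem integral_ite_abs_lt {r : ℝ} (hr : 0 ≤ r) (f : ℝ → ℝ) :
    ∫ u, (if |u| < r then f u else 0) = ∫ u in -r..r, f u := by
  have h_indicator : (fun u => if |u| < r then f u else 0) = (Set.Ioo (-r) r).indicator f := by
    ext u
    simp only [Set.indicator, Set.mem_Ioo, abs_lt]
  rw [h_indicator, integral_indicator measurableSet_Ioo,
    intervalIntegral.integral_of_le (by linarith), integral_Ioc_eq_integral_Ioo]

theorem integral_pow_mul_unifK (n : ℕ) :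
    ∫ u, u ^ n * unifK u = (1 - (-1 : ℝ) ^ (n + 1)) / (2 * (n + 1)) := by
  simp only [unifK, mul_ite, mul_zero]
  rw [integral_ite_abs_lt zero_le_one, intervalIntegral.integral_mul_const, integral_pow]
  field_simp
  ring

theorem unifC_eq : unifC = 1 / 3 := by
  simp only [unifC, mul_comm (unifK _), integral_pow_mul_unifK]
  norm_num

theorem unifG2_eq : unifG2 = !![1, 0, 1 / 3; 0, 1 / 3, 0; 1 / 3, 0, 1 / 5] := by
  ext i j
  fin_cases i <;> fin_cases j <;> norm_num [unifG2, integral_pow_mul_unifK]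

theorem unifG2_inv : unifG2⁻¹ = !![9 / 4, 0, -15 / 4; 0, 3, 0; -15 / 4, 0, 45 / 4] := by
  refine Matrix.inv_eq_right_inv ?_
  rw [unifG2_eq, Matrix.mul_fin_three, Matrix.one_fin_three]
  norm_num

theorem unifWRBC_eq (u : ℝ) :
    unifWRBC u = if |u| < 1 then 9 / 8 - 15 / 8 * u ^ 2 else 0 := by
  simp only [unifWRBC, unifWGPbc, unifC_eq, unifG2_inv, Fin.sum_univ_three, Matrix.of_apply,
    Matrix.cons_val, unifK]
  split_ifs
  · norm_num; ring
  · norm_num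

theorem integral_unifWRBC_sq : ∫ u, unifWRBC u ^ 2 = 9 / 8 := by
  have h_expand (u : ℝ) :
      (9 / 8 - 15 / 8 * u ^ 2) ^ 2 = 81 / 64 - 135 / 32 * u ^ 2 + 225 / 64 * u ^ 4 := by ring
  simp only [unifWRBC_eq, ite_pow, zero_pow two_ne_zero, h_expand]
  rw [integral_ite_abs_lt zero_le_one, intervalIntegral.integral_add,
    intervalIntegral.integral_sub] <;> norm_num [integral_pow]

/-- Uniform kernel, `p = 1`, interior point: explicit form of the RBC equivalent kernel,
`K_RBC = ∫ w_RBC² = 9/8`, and `K_PLP = 5/6 < 9/8 = K_RBC`. -/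
theorem uniform_rbc_kernel :
    (∀ u : ℝ, unifWRBC u = if |u| < 1 then 9 / 8 - 15 / 8 * u ^ 2 else 0) ∧
    (∫ u : ℝ, (unifWRBC u) ^ 2) = 9 / 8 ∧
    (5 : ℝ) / 6 < 9 / 8 :=
  ⟨unifWRBC_eq, integral_unifWRBC_sq, by norm_num⟩
end

section
/- Let K be a kernel supported on (−1,1) and for s ≥ 0 define the boundary equivalent kernel w_bnd(u,s) := e₀ᵀ(∫_{−s}^{1} r_p(v)r_p(v)ᵀK(v)dv)⁻¹ r_p(u)K(u), assuming the matrices are invertible, so that ∫_{−s}^{1} w_bnd(u,s)u^j du = δ_{j0} for 0 ≤ j ≤ p. Let C := ∫₀¹ w_bnd(u,0)u^{p+1}du and C_LP := ∫₀¹ w_bnd(s,0) ∫_{−s}^{1} w_bnd(u,s)u^{p+1} du ds. Define the boundary convolution kernel w_conv,bnd(u) := ∫₀¹ w_bnd(r,0) w_bnd(u−r, r) dr. Then ∫ w_conv,bnd(u) u^{p+1} du = C + C_LP. -/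
open MeasureTheory Set

/-! After swapping the order of integration (the integrand is bounded and supported in
`(0,2] × (0,1]`), the inner integral is
`∫ w_bnd(u - r, r) u^{p+1} du = ∫ w_bnd(v, r) (v + r)^{p+1} dv`.
Expanding `(v + r)^{p+1}` binomially, the reproducing moment conditions kill every term
except `r^{p+1}` and `∫ w_bnd(v, r) v^{p+1} dv`; integrating these against `w_bnd(r, 0)`
gives `C` and `C_LP`. -/

theorem MeasureTheory.IntegrableOn.of_forall_abs_le {α : Type*} [MeasurableSpace α]
    {μ : Measure α} {s : Set α} {f : α → ℝ} (hs : MeasurableSet s) (hμs : μ s < ⊤)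
    (hf : Measurable f) {C : ℝ} (hC : ∀ x ∈ s, |f x| ≤ C) : IntegrableOn f s μ :=
  .of_bound hμs hf.aestronglyMeasurable C (ae_restrict_of_forall_mem hs hC)

theorem integral_mul_add_pow {μ : Measure ℝ} {g : ℝ → ℝ} (a : ℝ) (n : ℕ)
    (hg : ∀ k ≤ n, Integrable (fun v => g v * v ^ k) μ) :
    ∫ v, g v * (v + a) ^ n ∂μ =
      ∑ k ∈ Finset.range (n + 1), (∫ v, g v * v ^ k ∂μ) * a ^ (n - k) * n.choose k := by
  simp_rw [add_pow, Finset.mul_sum]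
  rw [integral_finsetSum _ fun k hk => ?_]
  · refine Finset.sum_congr rfl fun k _ => ?_
    rw [← integral_mul_const, ← integral_mul_const]
    congr 1 with v
    ring
  · exact ((hg k (Finset.mem_range_succ_iff.mp hk)).mul_const (a ^ (n - k) * n.choose k)).congr
      (.of_forall fun v => by ring)

theorem integral_mul_add_pow_succ_of_moments {μ : Measure ℝ} {g : ℝ → ℝ} (a : ℝ) (n : ℕ)
    (hg : ∀ k ≤ n + 1, Integrable (fun v => g v * v ^ k) μ)
    (hmom : ∀ k ≤ n, ∫ v, g v * v ^ k ∂μ = if k = 0 then 1 else 0) :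
    ∫ v, g v * (v + a) ^ (n + 1) ∂μ = a ^ (n + 1) + ∫ v, g v * v ^ (n + 1) ∂μ := by
  have hmass : ∫ v, g v ∂μ = 1 := by simpa using hmom 0 (Nat.zero_le n)
  rw [integral_mul_add_pow a (n + 1) hg, Finset.sum_range_succ, Finset.sum_eq_single 0]
  · simp [hmass]
  · intro k hk hk0
    rw [hmom k (Finset.mem_range_succ_iff.mp hk), if_neg hk0, zero_mul, zero_mul]
  · simp

section BoundaryKernel

variable {w : ℝ → ℝ → ℝ} {M : ℝ}

theorem integrableOn_mul_pow_of_bounded (hmeas : Measurable (Function.uncurry w))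
    (hM : ∀ u s, |w u s| ≤ M) {r : ℝ} (hr : r ≤ 1) (k : ℕ) :
    IntegrableOn (fun v => w v r * v ^ k) (Ioc (-r) 1) := by
  refine .of_forall_abs_le (C := M) measurableSet_Ioc measure_Ioc_lt_top
    ((hmeas.comp (measurable_id.prodMk measurable_const)).mul (measurable_id.pow_const k))
    fun v hv => ?_
  have hv1 : |v| ≤ 1 := abs_le.2 ⟨by linarith [hv.1], hv.2⟩
  rw [abs_mul, abs_pow]
  exact (mul_le_of_le_one_right (abs_nonneg _) (pow_le_one₀ (abs_nonneg v) hv1)).trans (hM v r)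

theorem integral_shift_mul_pow (hmeas : Measurable (Function.uncurry w))
    (hM : ∀ u s, |w u s| ≤ M) (hsupp : ∀ s u, u ∉ Ioc (-s) 1 → w u s = 0) {p : ℕ} {r : ℝ}
    (hr : r ≤ 1)
    (hmom : ∀ j ≤ p, ∫ u in Ioc (-r) 1, w u r * u ^ j = if j = 0 then 1 else 0) :
    ∫ u, w (u - r) r * u ^ (p + 1) = r ^ (p + 1) + ∫ u in Ioc (-r) 1, w u r * u ^ (p + 1) :=
  calc ∫ u, w (u - r) r * u ^ (p + 1) = ∫ v, w v r * (v + r) ^ (p + 1) := by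
        simpa using integral_sub_right_eq_self (fun v => w v r * (v + r) ^ (p + 1)) r
    _ = ∫ v in Ioc (-r) 1, w v r * (v + r) ^ (p + 1) :=
        (setIntegral_eq_integral_of_forall_compl_eq_zero fun v hv => by
          rw [hsupp r v hv, zero_mul]).symm
    _ = _ := integral_mul_add_pow_succ_of_moments r p
        (fun k _ => integrableOn_mul_pow_of_bounded hmeas hM hr k) hmom

theorem mul_shift_eq_zero_of_notMem (hsupp : ∀ s u, u ∉ Ioc (-s) 1 → w u s = 0) {u r : ℝ}
    (h : (u, r) ∉ Ioc 0 2 ×ˢ Ioc 0 1) : w r 0 * w (u - r) r = 0 := by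
  by_cases hr : r ∈ Ioc 0 1
  · refine mul_eq_zero_of_right _ (hsupp r (u - r) fun hu => h ⟨⟨?_, ?_⟩, hr⟩)
    · linarith [hu.1]
    · linarith [hu.2, hr.2]
  · exact mul_eq_zero_of_left (hsupp 0 r (by simpa using hr)) _

theorem integrable_mul_shift_mul_pow (hmeas : Measurable (Function.uncurry w))
    (hM : ∀ u s, |w u s| ≤ M) (hsupp : ∀ s u, u ∉ Ioc (-s) 1 → w u s = 0) (n : ℕ) :
    Integrable (fun q : ℝ × ℝ => w q.2 0 * (w (q.1 - q.2) q.2 * q.1 ^ n))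
      (volume.prod (volume.restrict (Ioc 0 1))) := by
  have hmeasF : Measurable fun q : ℝ × ℝ => w q.2 0 * (w (q.1 - q.2) q.2 * q.1 ^ n) :=
    (hmeas.comp (measurable_snd.prodMk measurable_const)).mul
      ((hmeas.comp ((measurable_fst.sub measurable_snd).prodMk measurable_snd)).mul
        (measurable_fst.pow_const n))
  have hfin :
      (volume : Measure ℝ).prod (volume.restrict (Ioc (0 : ℝ) 1)) (Ioc 0 2 ×ˢ Ioc 0 1) < ⊤ := by
    rw [Measure.prod_prod]
    exact ENNReal.mul_lt_top measure_Ioc_lt_top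
      ((Measure.restrict_apply_le _ _).trans_lt measure_Ioc_lt_top)
  refine IntegrableOn.integrable_of_forall_notMem_eq_zero
    (.of_forall_abs_le (C := M * (M * 2 ^ n)) (measurableSet_Ioc.prod measurableSet_Ioc) hfin
      hmeasF fun q hq => ?_) fun q hq => ?_
  · have hq1 : |q.1| ≤ 2 := abs_le.2 ⟨by linarith [hq.1.1], hq.1.2⟩
    have hM0 : 0 ≤ M := (abs_nonneg _).trans (hM 0 0)
    rw [abs_mul, abs_mul, abs_pow]
    gcongr
    exacts [hM _ _, hM _ _]
  · simp [← mul_assoc, mul_shift_eq_zero_of_notMem hsupp hq]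

end BoundaryKernel

theorem boundary_convolution_moment_general
    (p : ℕ)
    (wbnd : ℝ → ℝ → ℝ)
    (hmeas : Measurable (Function.uncurry wbnd))
    (hbdd : ∃ M : ℝ, ∀ u s : ℝ, |wbnd u s| ≤ M)
    (hsupp : ∀ s u : ℝ, u ∉ Set.Ioc (-s) 1 → wbnd u s = 0)
    (hmom : ∀ s ∈ Set.Icc (0 : ℝ) 1, ∀ j : ℕ, j ≤ p →
        (∫ u in Set.Ioc (-s) 1, wbnd u s * u ^ j) = if j = 0 then 1 else 0)
    (C CLP : ℝ)
    (hC : C = ∫ u in Set.Ioc (0 : ℝ) 1, wbnd u 0 * u ^ (p + 1))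
    (hCLP : CLP = ∫ s in Set.Ioc (0 : ℝ) 1,
        wbnd s 0 * ∫ u in Set.Ioc (-s) 1, wbnd u s * u ^ (p + 1))
    (wconv : ℝ → ℝ)
    (hconv : ∀ u : ℝ, wconv u = ∫ r in Set.Ioc (0 : ℝ) 1, wbnd r 0 * wbnd (u - r) r) :
    (∫ u : ℝ, wconv u * u ^ (p + 1)) = C + CLP := by
  obtain ⟨M, hM⟩ := hbdd
  have hF := integrable_mul_shift_mul_pow hmeas hM hsupp (p + 1)
  have hinner : ∀ r ∈ Ioc (0 : ℝ) 1, ∫ u, wbnd r 0 * (wbnd (u - r) r * u ^ (p + 1)) =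
      wbnd r 0 * r ^ (p + 1) + wbnd r 0 * ∫ u in Ioc (-r) 1, wbnd u r * u ^ (p + 1) :=
    fun r hr => by
      rw [integral_const_mul, integral_shift_mul_pow hmeas hM hsupp hr.2
        (hmom r (Ioc_subset_Icc_self hr)), mul_add]
  -- By subtraction, which spares proving measurability of `s ↦ ∫ w_bnd(u, s) u^{p+1} du`.
  have hCLP' : CLP = (∫ r in Ioc 0 1, ∫ u, wbnd r 0 * (wbnd (u - r) r * u ^ (p + 1))) - C := by
    rw [hCLP, hC, ← integral_sub hF.integral_prod_right
      ((integrableOn_mul_pow_of_bounded hmeas hM zero_le_one (p + 1)).mono_set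
        (by simp))]
    exact setIntegral_congr_fun measurableSet_Ioc fun r hr => by simp only [hinner r hr]; ring
  calc ∫ u, wconv u * u ^ (p + 1)
      = ∫ u, ∫ r in Ioc 0 1, wbnd r 0 * (wbnd (u - r) r * u ^ (p + 1)) := by
        simp_rw [hconv, ← integral_mul_const, mul_assoc]
    _ = ∫ r in Ioc 0 1, ∫ u, wbnd r 0 * (wbnd (u - r) r * u ^ (p + 1)) :=
        integral_integral_swap hF
    _ = C + CLP := by rw [hCLP']; ring

/-- Boundary convolution moment identity: the `(p+1)`-th moment of the boundary
convolution kernel `w_conv,bnd(u) = ∫₀¹ w_bnd(r,0) w_bnd(u−r,r) dr` equals `C + C_LP`. -/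
theorem boundary_convolution_moment
    (p : ℕ) (hp : 1 ≤ p) (hodd : Odd p)
    (wbnd : ℝ → ℝ → ℝ)
    (hmeas : Measurable (Function.uncurry wbnd))
    (hbdd : ∃ M : ℝ, ∀ u s : ℝ, |wbnd u s| ≤ M)
    (hsupp : ∀ s u : ℝ, u ∉ Set.Ioc (-s) 1 → wbnd u s = 0)
    (hmom : ∀ s ∈ Set.Icc (0 : ℝ) 1, ∀ j : ℕ, j ≤ p →
        (∫ u in Set.Ioc (-s) 1, wbnd u s * u ^ j) = if j = 0 then 1 else 0)
    (C CLP : ℝ)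
    (hC : C = ∫ u in Set.Ioc (0 : ℝ) 1, wbnd u 0 * u ^ (p + 1))
    (hCLP : CLP = ∫ s in Set.Ioc (0 : ℝ) 1,
        wbnd s 0 * ∫ u in Set.Ioc (-s) 1, wbnd u s * u ^ (p + 1))
    (wconv : ℝ → ℝ)
    (hconv : ∀ u : ℝ, wconv u = ∫ r in Set.Ioc (0 : ℝ) 1, wbnd r 0 * wbnd (u - r) r) :
    (∫ u : ℝ, wconv u * u ^ (p + 1)) = C + CLP :=
  boundary_convolution_moment_general p wbnd hmeas hbdd hsupp hmom C CLP hC hCLP wconv hconv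
end
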